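/- arXiv:2109.09624 — 6 statements merged into one kernel-verified Lean document; each statement's English description precedes it below -/
import Mathlib

section
/- Let k ∈ ℕ and for each i ∈ Fin k let μ i be a probability measure on ℝ with no atoms (μ i {x} = 0 for every x ∈ ℝ). Then for every nonzero multivariate polynomial P ∈ MvPolynomial (Fin k) ℝ, the product measure Measure.pi μ assigns measure zero to the set {x : Fin k → ℝ | MvPolynomial.eval x P = 0}. -/
open MeasureTheory

theorem Polynomial.ae_map_ne_zero {α S T : Type*} [Semiring S] [Semiring T] [MeasurableSpace α]
    {ν : Measure α} {f : α → S →+* T} (hf : ∀ s, s ≠ 0 → ∀ᵐ a ∂ν, f a s ≠ 0)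
    {q : Polynomial S} (hq : q ≠ 0) : ∀ᵐ a ∂ν, q.map (f a) ≠ 0 := by
  filter_upwards [hf _ (leadingCoeff_ne_zero.mpr hq)] with a ha hmap
  exact ha (by rw [leadingCoeff, ← coeff_map, hmap, coeff_zero])

namespace MvPolynomial

theorem measurableSet_setOf_eval_ne_zero {n : ℕ} (P : MvPolynomial (Fin n) ℝ) :
    MeasurableSet {x : Fin n → ℝ | eval x P ≠ 0} :=
  (continuous_eval P).measurable (measurableSet_singleton 0).compl

/- Induction on `n` via Fubini along the first coordinate: for a.e. value `y` of the others, `P`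
specializes to a nonzero polynomial in the first variable (a nonzero coefficient of `P` over
`MvPolynomial (Fin n) ℝ` survives a.e. by induction), whose finitely many roots are `μ 0`-null. -/
theorem ae_eval_ne_zero {n : ℕ} (μ : Fin n → Measure ℝ) [∀ i, SigmaFinite (μ i)]
    [∀ i, NullSingletonClass (μ i)] {P : MvPolynomial (Fin n) ℝ} (hP : P ≠ 0) :
    ∀ᵐ x ∂Measure.pi μ, eval x P ≠ 0 := by
  induction n with
  | zero =>
    rw [eq_C_of_isEmpty P] at hP ⊢
    exact .of_forall fun x => by simpa using hP
  | succ n ih =>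
    set e := (MeasurableEquiv.piFinSuccAbove (fun _ => ℝ) 0).symm
    have hmp : MeasurePreserving e _ _ := (measurePreserving_piFinSuccAbove μ 0).symm
    have hZ : MeasurableSet {z | eval (e z) P ≠ 0} :=
      e.measurable (measurableSet_setOf_eval_ne_zero P)
    rw [← hmp.map_eq, ae_map_iff e.measurable.aemeasurable (measurableSet_setOf_eval_ne_zero P),
      Measure.ae_prod_iff_ae_ae hZ, Measure.ae_ae_comm hZ]
    filter_upwards [Polynomial.ae_map_ne_zero (fun Q hQ => ih _ hQ)
      ((finSuccEquiv ℝ n).injective.ne hP)] with y hy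
    filter_upwards [(Polynomial.finite_setOfPred_isRoot hy).countable.ae_notMem (μ 0)] with t ht
    rw [show e (t, y) = Fin.cons t y by simp [e, Fin.consEquiv], eval_eq_eval_mv_eval']
    exact ht

end MvPolynomial

/-- Lemma 1 of reference [me]: if `μ i` are atomless probability measures on `ℝ`
(continuous cumulative distribution functions), then a nonzero multivariate polynomial
in the `k` coordinates vanishes on a set of `Measure.pi μ`-measure zero; i.e. a nonzero
polynomial of finitely many independent continuous random variables is nonzero almost
surely. -/
theorem nonzero_polynomial_ae_nonzero (k : ℕ) (μ : Fin k → Measure ℝ)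
    [∀ i, IsProbabilityMeasure (μ i)] (hatom : ∀ i (x : ℝ), μ i {x} = 0)
    (P : MvPolynomial (Fin k) ℝ) (hP : P ≠ 0) :
    Measure.pi μ {x : Fin k → ℝ | MvPolynomial.eval x P = 0} = 0 := by
  have : ∀ i, NullSingletonClass (μ i) := fun i => ⟨hatom i⟩
  simpa using ae_iff.mp (MvPolynomial.ae_eval_ne_zero μ hP)
end

section
/- Let ι be a finite type and J ∈ ℕ. Let F be the fraction field of MvPolynomial ι ℝ and G the fraction field of MvPolynomial (Fin J × ι) ℝ. For each r ∈ Fin J let φ r : F →+* G be the field homomorphism induced on fraction fields by the injective ring homomorphism MvPolynomial.rename (fun i => (r, i)) (i.e., substituting for each variable X i an independent copy X (r,i)). If p : Fin J → F is a family of elements linearly independent over ℝ, then the determinant of the J × J matrix with (r, j) entry φ r (p j) is a nonzero element of G. -/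
/-!
Clear denominators: multiplying every `p j` by one common nonzero polynomial `b` turns the
family into linearly independent polynomials `Q j`, and multiplies row `r` of the matrix by
the image of `b` under `φ r`. The determinant of the polynomial matrix `(Q j)(X_r)` is
nonzero because some evaluation of it is: linearly independent functions admit points
`s_1, …, s_J` with `det (f j (s r)) ≠ 0`. Indeed, expanding along a new first row gives
`∑ j, c j * f j t`, a combination with `c 0 ≠ 0` by induction, so it is nonzero at some `t`.
-/

open Matrix MvPolynomial

theorem LinearIndependent.exists_det_apply_ne_zero {K S : Type*} [Field K] :
    ∀ {n : ℕ} {f : Fin n → S → K}, LinearIndependent K f →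
      ∃ s : Fin n → S, (of fun r j => f j (s r)).det ≠ 0
  | 0, _, _ => ⟨finZeroElim, by simp⟩
  | n + 1, f, hf => by
    obtain ⟨s, hs⟩ := (hf.comp Fin.succ (Fin.succ_injective n)).exists_det_apply_ne_zero
    let c : Fin (n + 1) → K := fun j =>
      (-1) ^ (j : ℕ) * (of fun r j' => f (j.succAbove j') (s r)).det
    have hc : c 0 ≠ 0 := by simpa [c] using hs
    obtain ⟨t, ht⟩ : ∃ t, ∑ j, c j * f j t ≠ 0 := by
      by_contra! h
      refine hc (Fintype.linearIndependent_iff.mp hf c (funext fun t => ?_) 0)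
      simpa using h t
    refine ⟨Fin.cons t s, ?_⟩
    rw [det_succ_row_zero]
    convert ht using 2 with j
    simp only [c, of_apply, Fin.cons_zero, submatrix, Fin.cons_succ]
    ring

theorem MvPolynomial.det_rename_ne_zero_of_linearIndependent {K σ : Type*} [Field K] [Infinite K]
    {n : ℕ} {Q : Fin n → MvPolynomial σ K} (hQ : LinearIndependent K Q) :
    (of fun r j : Fin n => rename (fun i => (r, i)) (Q j)).det ≠ 0 := by
  let evals : MvPolynomial σ K →ₗ[K] (σ → K) → K := LinearMap.pi fun x => (aeval x).toLinearMap
  have h_evals : LinearMap.ker evals = ⊥ :=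
    LinearMap.ker_eq_bot.mpr fun q q' h => funext fun x => by simpa [evals] using congrFun h x
  obtain ⟨s, hs⟩ := (hQ.map' evals h_evals).exists_det_apply_ne_zero
  contrapose! hs
  convert congrArg (eval fun x : Fin n × σ => s x.1 x.2) hs using 1
  · rw [RingHom.map_det]
    congr 1
    ext r j
    simp [evals, eval_rename, Function.comp_def]
  · simp

theorem LinearIndependent.exists_integer_multiples {K R L ι : Type*} [Field K] [CommRing R]
    [Field L] [Algebra K R] [Algebra R L] [Algebra K L] [IsScalarTower K R L]
    [IsFractionRing R L] [Finite ι] {p : ι → L} (hp : LinearIndependent K p) :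
    ∃ (b : nonZeroDivisors R) (Q : ι → R),
      (∀ j, algebraMap R L (Q j) = algebraMap R L b * p j) ∧ LinearIndependent K Q := by
  obtain ⟨b, hb⟩ := IsLocalization.exist_integer_multiples_of_finite (nonZeroDivisors R) p
  choose Q hQ using hb
  have hQ' : ∀ j, algebraMap R L (Q j) = algebraMap R L b * p j := fun j => by
    rw [hQ j, Algebra.smul_def]
  refine ⟨b, Q, hQ', LinearIndependent.of_comp (IsScalarTower.toAlgHom K R L).toLinearMap ?_⟩
  have hb0 : algebraMap R L b ≠ 0 := (IsLocalization.map_units L b).ne_zero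
  simpa [Function.comp_def, hQ'] using
    hp.map' (LinearMap.mulLeft K (algebraMap R L b))
      (LinearMap.ker_eq_bot.mpr (mul_right_injective₀ hb0))

theorem det_of_independent_fractional_polynomials_general (ι : Type) (J : ℕ)
    (φ : Fin J → (FractionRing (MvPolynomial ι ℝ) →+* FractionRing (MvPolynomial (Fin J × ι) ℝ)))
    (hφ : ∀ (r : Fin J) (q : MvPolynomial ι ℝ),
      φ r (algebraMap (MvPolynomial ι ℝ) (FractionRing (MvPolynomial ι ℝ)) q) =
        algebraMap (MvPolynomial (Fin J × ι) ℝ) (FractionRing (MvPolynomial (Fin J × ι) ℝ))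
          (MvPolynomial.rename (fun i => (r, i)) q))
    (p : Fin J → FractionRing (MvPolynomial ι ℝ))
    (hp : LinearIndependent ℝ p) :
    Matrix.det (Matrix.of fun r j : Fin J => φ r (p j)) ≠ 0 := by
  obtain ⟨b, Q, hQ, hQind⟩ := hp.exists_integer_multiples (R := MvPolynomial ι ℝ)
  have h_cleared := (map_ne_zero_iff _ (IsFractionRing.injective (MvPolynomial (Fin J × ι) ℝ)
    (FractionRing (MvPolynomial (Fin J × ι) ℝ)))).mpr (det_rename_ne_zero_of_linearIndependent hQind)
  rw [RingHom.map_det] at h_cleared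
  refine right_ne_zero_of_mul (a := ∏ r, φ r (algebraMap _ _ (b : MvPolynomial ι ℝ))) ?_
  rw [← det_mul_column]
  convert h_cleared using 2
  ext r j
  simp only [of_apply, RingHom.mapMatrix_apply, map_apply]
  rw [← hφ, hQ, map_mul]

/-- Lemma 3 of reference [me]: let `F` be the fraction field of `MvPolynomial ι ℝ` and `G`
the fraction field of `MvPolynomial (Fin J × ι) ℝ`. For each `r : Fin J`, let
`φ r : F →+* G` be the field homomorphism induced on fraction fields by the (injective)
ring homomorphism `MvPolynomial.rename (fun i => (r, i))`, i.e. substituting an independent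
copy `X (r, i)` for each variable `X i`. If the fractional polynomials `p j`, `j : Fin J`,
are linearly independent over `ℝ`, then the determinant of the `J × J` matrix with
`(r, j)` entry `φ r (p j)` is nonzero. -/
theorem det_of_independent_fractional_polynomials (ι : Type) [Fintype ι] (J : ℕ)
    (φ : Fin J → (FractionRing (MvPolynomial ι ℝ) →+* FractionRing (MvPolynomial (Fin J × ι) ℝ)))
    (hφ : ∀ (r : Fin J) (q : MvPolynomial ι ℝ),
      φ r (algebraMap (MvPolynomial ι ℝ) (FractionRing (MvPolynomial ι ℝ)) q) =
        algebraMap (MvPolynomial (Fin J × ι) ℝ) (FractionRing (MvPolynomial (Fin J × ι) ℝ))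
          (MvPolynomial.rename (fun i => (r, i)) q))
    (p : Fin J → FractionRing (MvPolynomial ι ℝ))
    (hp : LinearIndependent ℝ p) :
    Matrix.det (Matrix.of fun r j : Fin J => φ r (p j)) ≠ 0 :=
  det_of_independent_fractional_polynomials_general ι J φ hφ p hp
end

section
/- Let m, T ∈ ℕ and let α : Fin T → (Fin m → ℕ) be injective (T pairwise distinct exponent tuples). In the polynomial ring MvPolynomial (Fin T × Fin m) ℝ, define the T × T matrix M by M t j = ∏_{k ∈ Fin m} (X (t,k))^{α j k}. Then det M ≠ 0. -/
/-!
In the Leibniz expansion of the determinant, the permutation `σ` contributes `sign σ` times the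
monomial whose exponent at the variable `(t, k)` is `α (σ⁻¹ t) k`. Since `α` is injective these
exponents determine `σ`, so the monomials are pairwise distinct and no cancellation can occur.
-/

open MvPolynomial Function

namespace MvPolynomial

theorem sum_units_smul_monomial_ne_zero {R σ ι : Type*} [CommRing R] [Nontrivial R]
    [Fintype ι] [Nonempty ι] {D : ι → σ →₀ ℕ} (hD : Injective D) (ε : ι → ℤˣ) :
    ∑ i, ε i • monomial (D i) (1 : R) ≠ 0 := by
  classical
  obtain ⟨i⟩ := ‹Nonempty ι›
  intro h
  have hcoeff := congrArg (coeff (D i)) h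
  simp only [coeff_sum, coeff_smul, coeff_monomial, hD.eq_iff, coeff_zero] at hcoeff
  rcases Int.units_eq_one_or (ε i) with hε | hε <;> simp [hε] at hcoeff

theorem prod_univ_X_pow_eq_monomial {R σ : Type*} [CommSemiring R] [Fintype σ] (e : σ →₀ ℕ) :
    ∏ i, (X i : MvPolynomial σ R) ^ e i = monomial e 1 := by
  rw [monomial_eq, C_1, one_mul, Finsupp.prod_pow]

end MvPolynomial

section

variable {ι κ : Type*} [Fintype ι] [Fintype κ]

noncomputable def permExponent (α : ι → κ → ℕ) (σ : Equiv.Perm ι) : ι × κ →₀ ℕ :=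
  Finsupp.equivFunOnFinite.symm fun p => α (σ⁻¹ p.1) p.2

theorem permExponent_apply (α : ι → κ → ℕ) (σ : Equiv.Perm ι) (i : ι) (k : κ) :
    permExponent α σ (i, k) = α (σ⁻¹ i) k := rfl

theorem permExponent_injective {α : ι → κ → ℕ} (hα : Injective α) :
    Injective (permExponent α) := by
  intro σ τ h
  have hinv : σ⁻¹ = τ⁻¹ := Equiv.ext fun i =>
    hα <| funext fun k => by simpa only [permExponent_apply] using DFunLike.congr_fun h (i, k)
  exact inv_injective hinv

theorem prod_prod_X_pow_eq_monomial_permExponent {R : Type*} [CommSemiring R]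
    (α : ι → κ → ℕ) (σ : Equiv.Perm ι) :
    ∏ i, ∏ k, (X (σ i, k) : MvPolynomial (ι × κ) R) ^ α i k = monomial (permExponent α σ) 1 := by
  rw [← prod_univ_X_pow_eq_monomial, Fintype.prod_prod_type,
    ← Equiv.prod_comp σ fun t => ∏ k, X (t, k) ^ permExponent α σ (t, k)]
  simp only [permExponent_apply, Equiv.Perm.coe_inv, Equiv.symm_apply_apply]

theorem det_prod_X_pow_ne_zero {R : Type*} [CommRing R] [Nontrivial R] [DecidableEq ι]
    {α : ι → κ → ℕ} (hα : Injective α) :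
    (Matrix.of fun t j : ι => ∏ k, (X (t, k) : MvPolynomial (ι × κ) R) ^ α j k).det ≠ 0 := by
  simpa only [Matrix.det_apply, Matrix.of_apply, prod_prod_X_pow_eq_monomial_permExponent]
    using sum_units_smul_monomial_ne_zero (permExponent_injective hα) Equiv.Perm.sign

end

/-- Generalized-Vandermonde genericity (algebraic core of Lemmas 1–3 of the paper):
for `T` pairwise distinct exponent tuples `α j : Fin m → ℕ`, the `T × T` matrix over
`MvPolynomial (Fin T × Fin m) ℝ` whose `(t, j)` entry is `∏ k, X (t, k) ^ α j k`
(each row `t` using an independent copy of the variables) has nonzero determinant. -/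
theorem generalized_vandermonde_det_ne_zero (m T : ℕ) (α : Fin T → Fin m → ℕ)
    (hα : Function.Injective α) :
    Matrix.det
      (Matrix.of fun t j : Fin T =>
        ∏ k : Fin m, (MvPolynomial.X (t, k) : MvPolynomial (Fin T × Fin m) ℝ) ^ α j k) ≠ 0 :=
  det_prod_X_pow_ne_zero hα
end

section
/- Let m, T ∈ ℕ, let α : Fin T → (Fin m → ℕ) be injective, and for each (t,k) ∈ Fin T × Fin m let μ (t,k) be an atomless probability measure on ℝ. Then for Measure.pi μ–almost every x : (Fin T × Fin m) → ℝ, the real T × T matrix with entries M t j = ∏_{k ∈ Fin m} (x (t,k))^{α j k} is invertible; equivalently, the T vectors ( ∏_k x(t,k)^{α j k} )_{t ∈ Fin T}, for j ∈ Fin T, are almost surely linearly independent. -/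
/-!
Read the matrix over the polynomial ring in the variables `(t, k)`. After transposing, the
permutation `σ` contributes `± ∏ (t, k), X (t, k) ^ α (σ t) k` to the determinant; since `α` is
injective these monomials are pairwise distinct, so the determinant is a nonzero polynomial.
A nonzero polynomial vanishes only on a null set of a product of σ-finite atomless measures:
adjoining one variable at a time, Fubini reduces this to the fact that for almost every value of
the old variables the leading coefficient in the new one is nonzero, and a nonzero polynomial in
one variable has finitely many roots.
-/

open MeasureTheory

theorem Polynomial.ae_eval_ne_zero {R : Type*} [CommRing R] [IsDomain R] [MeasurableSpace R]
    {ν : Measure R} [NullSingletonClass ν] {p : Polynomial R} (hp : p ≠ 0) :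
    ∀ᵐ a ∂ν, p.eval a ≠ 0 :=
  measure_mono_null (fun _ ha => not_not.mp ha)
    ((Polynomial.finite_setOfPred_isRoot hp).countable.measure_zero ν)

theorem MeasureTheory.Measure.ae_pi_option_iff {ι α : Type*} [Fintype ι] [MeasurableSpace α]
    {μ : Option ι → Measure α} [∀ i, SigmaFinite (μ i)] {p : (Option ι → α) → Prop}
    (hp : MeasurableSet {x | p x}) :
    (∀ᵐ x ∂Measure.pi μ, p x) ↔
      ∀ᵐ y ∂Measure.pi (fun i => μ (some i)), ∀ᵐ a ∂μ none, p fun o => o.elim a y := by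
  let e := (MeasurableEquiv.piOptionEquivProd fun _ : Option ι => α).symm
  have he (y : ι → α) (a : α) : e (y, a) = fun o => o.elim a y :=
    funext (by rintro (_ | _) <;> rfl)
  rw [← Measure.pi_map_piOptionEquivProd, ae_map_iff e.measurable.aemeasurable hp,
    Measure.ae_prod_iff_ae_ae (p := fun z => p (e z)) (hp.preimage e.measurable)]
  simp only [he]

namespace MvPolynomial

section Measurability

variable {ι R : Type*} [CommSemiring R] [MeasurableSpace R] [MeasurableAdd₂ R] [MeasurableMul₂ R]

theorem measurable_eval (P : MvPolynomial ι R) : Measurable fun x : ι → R => eval x P := by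
  induction P using MvPolynomial.induction_on with
  | C c => simpa only [eval_C] using measurable_const
  | add p q hp hq => simp only [map_add]; exact hp.add hq
  | mul_X p i hp => simp only [map_mul, eval_X]; exact hp.mul (measurable_pi_apply i)

theorem measurableSet_eval_ne_zero [MeasurableSingletonClass R] (P : MvPolynomial ι R) :
    MeasurableSet {x : ι → R | eval x P ≠ 0} :=
  (measurable_eval P (measurableSet_singleton 0)).compl

end Measurability

section AENonvanishing

variable {R : Type*} [CommRing R] [MeasurableSpace R]

variable (R) in
def AENonvanishing (ι : Type*) [Fintype ι] : Prop :=
  ∀ (μ : ι → Measure R) [∀ i, SigmaFinite (μ i)] [∀ i, NullSingletonClass (μ i)]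
    {P : MvPolynomial ι R}, P ≠ 0 → ∀ᵐ x ∂Measure.pi μ, eval x P ≠ 0

theorem AENonvanishing.of_equiv [MeasurableSingletonClass R] [MeasurableAdd₂ R] [MeasurableMul₂ R]
    {ι κ : Type*} [Fintype ι] [Fintype κ] (e : ι ≃ κ)
    (h : AENonvanishing R ι) : AENonvanishing R κ := by
  intro μ _ _ P hP
  have hmp := measurePreserving_piCongrLeft μ e
  have hP' : rename e.symm P ≠ 0 := by
    rwa [← map_zero (rename e.symm), (rename_injective _ e.symm.injective).ne_iff]
  rw [← hmp.map_eq, ae_map_iff hmp.measurable.aemeasurable (measurableSet_eval_ne_zero P)]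
  filter_upwards [h (fun i => μ (e i)) hP'] with y hy
  have hy' : MeasurableEquiv.piCongrLeft (fun _ => R) e y = y ∘ e.symm := by
    ext k
    simp only [MeasurableEquiv.coe_piCongrLeft, Equiv.piCongrLeft_apply, eq_rec_constant,
      Function.comp_apply]
  rwa [hy', ← eval_rename]

theorem aeNonvanishing_of_isEmpty (ι : Type*) [Fintype ι] [IsEmpty ι] : AENonvanishing R ι := by
  intro μ _ _ P hP
  obtain ⟨c, rfl⟩ := C_surjective ι P
  exact Filter.Eventually.of_forall fun x => by simpa using hP

theorem AENonvanishing.option [IsDomain R] [MeasurableSingletonClass R] [MeasurableAdd₂ R]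
    [MeasurableMul₂ R] {ι : Type*} [Fintype ι] (h : AENonvanishing R ι) :
    AENonvanishing R (Option ι) := by
  intro μ _ _ P hP
  rw [Measure.ae_pi_option_iff (measurableSet_eval_ne_zero P)]
  have hq : optionEquivLeft R ι P ≠ 0 := (map_ne_zero_iff _ (AlgEquiv.injective _)).mpr hP
  filter_upwards [h _ (Polynomial.leadingCoeff_ne_zero.mpr hq)] with y hy
  simp only [optionEquivLeft_elim_eval]
  exact Polynomial.ae_eval_ne_zero (Polynomial.leadingCoeff_ne_zero.mp
    ((Polynomial.leadingCoeff_map_of_leadingCoeff_ne_zero _ hy).trans_ne hy))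

variable [IsDomain R] [MeasurableSingletonClass R] [MeasurableAdd₂ R] [MeasurableMul₂ R]

theorem aeNonvanishing (ι : Type*) [Fintype ι] : AENonvanishing R ι := by
  refine Fintype.induction_empty_option (P := fun ι _ => AENonvanishing R ι) ?_
    (aeNonvanishing_of_isEmpty PEmpty) (fun _ _ h => h.option) ι
  intro ι κ _ e h
  let _ : Fintype ι := Fintype.ofEquiv κ e.symm
  exact h.of_equiv e

end AENonvanishing

theorem prod_X_pow_eq_monomial_equivFunOnFinite {σ R : Type*} [Fintype σ] [CommSemiring R]
    (f : σ → ℕ) : ∏ i, X i ^ f i = monomial (Finsupp.equivFunOnFinite.symm f) (1 : R) := by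
  rw [monomial_eq, C_1, one_mul, Finsupp.prod_fintype _ _ fun _ => pow_zero _]
  rfl

theorem det_of_prod_X_pow_ne_zero {n κ R : Type*} [Fintype n] [DecidableEq n] [Fintype κ]
    [CommRing R] [Nontrivial R] {α : n → κ → ℕ} (hα : Function.Injective α) :
    (Matrix.of fun t j => ∏ k, (X (t, k) : MvPolynomial (n × κ) R) ^ α j k).det ≠ 0 := by
  classical
  let e : Equiv.Perm n → (n × κ →₀ ℕ) := fun σ =>
    Finsupp.equivFunOnFinite.symm fun p => α (σ p.1) p.2
  have he : Function.Injective e := fun σ τ h =>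
    Equiv.ext fun t => hα <| _root_.funext fun k => DFunLike.congr_fun h (t, k)
  have hdet : (Matrix.of fun t j => ∏ k, (X (t, k) : MvPolynomial (n × κ) R) ^ α j k).det =
      ∑ σ : Equiv.Perm n, monomial (e σ) (Equiv.Perm.sign σ • (1 : R)) := by
    rw [← Matrix.det_transpose, Matrix.det_apply]
    refine Finset.sum_congr rfl fun σ _ => ?_
    rw [← smul_monomial, ← prod_X_pow_eq_monomial_equivFunOnFinite, Fintype.prod_prod_type]
    rfl
  refine ne_zero_iff.mpr ⟨e 1, ?_⟩
  rw [hdet, coeff_sum, Finset.sum_eq_single 1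
    (fun σ _ hσ => by rw [coeff_monomial, if_neg (he.ne hσ)]) (by simp),
    coeff_monomial, if_pos rfl, Equiv.Perm.sign_one, one_smul]
  exact one_ne_zero

end MvPolynomial

/-- Almost-sure linear independence of the beamforming vectors (Lemmas 1–3 of the paper):
if the entries `x (t, k)` are independent random variables with atomless (continuous)
distributions and `α : Fin T → Fin m → ℕ` is injective (pairwise distinct exponent tuples),
then almost surely the `T × T` real matrix with entries `∏ k, x (t, k) ^ α j k` is
invertible; equivalently, the `T` vectors `(∏ k, x (t, k) ^ α j k)_t`, `j : Fin T`, are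
almost surely linearly independent. -/
theorem beamforming_matrix_ae_invertible (m T : ℕ) (α : Fin T → Fin m → ℕ)
    (hα : Function.Injective α) (μ : Fin T × Fin m → Measure ℝ)
    [∀ p, IsProbabilityMeasure (μ p)] [∀ p, NullSingletonClass (μ p)] :
    ∀ᵐ x ∂Measure.pi μ,
      IsUnit (Matrix.of fun t j : Fin T => ∏ k : Fin m, x (t, k) ^ α j k) := by
  filter_upwards [MvPolynomial.aeNonvanishing _ μ
    (MvPolynomial.det_of_prod_X_pow_ne_zero (R := ℝ) hα)] with x hx
  rw [Matrix.isUnit_iff_isUnit_det, isUnit_iff_ne_zero]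
  convert hx using 1
  rw [RingHom.map_det]
  congr 1
  ext t j
  simp
end

section
/- Let mx, my, mz, J ∈ ℕ and let F be the fraction field of MvPolynomial (Fin mx ⊕ (Fin my ⊕ Fin mz)) ℝ; write X i, Y i, Z i for the images in F of the variables indexed by the three summands. Suppose that for each j ∈ Fin J we are given finite sets C j ⊆ Fin mx and D j ⊆ Fin my, an exponent vector a j : Fin mx → ℕ, and elements P₁ j i' i'' ∈ F and P₂ j i' i'' ∈ F (for i' ∈ C j, i'' ∈ D j) each lying in the subfield of F generated over ℝ by the Z-variables (i.e., in the image of the fraction field of MvPolynomial (Fin mz) ℝ under the embedding induced by the inclusion of variables). Define f j = ∏_{i ∈ Fin mx} ( X i + ∑_{i' ∈ C j} ∑_{i'' ∈ D j} ( X i' · Y i'' · P₁ j i' i'' + Y i'' · P₂ j i' i'' ) )^{a j i}. If the exponent vectors a j, j ∈ Fin J, are pairwise distinct, then the family (f j)_{j ∈ Fin J} is linearly independent over ℝ in F. -/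
/-- The fraction field `F` of the multivariate polynomial ring over `ℝ` in three groups of
variables: `mx` x-variables, `my` y-variables and `mz` z-variables. -/
abbrev FracField (mx my mz : ℕ) : Type :=
  FractionRing (MvPolynomial (Fin mx ⊕ (Fin my ⊕ Fin mz)) ℝ)

/-- The image in `F` of the `i`-th x-variable. -/
noncomputable def Xvar (mx my mz : ℕ) (i : Fin mx) : FracField mx my mz :=
  algebraMap (MvPolynomial (Fin mx ⊕ (Fin my ⊕ Fin mz)) ℝ) (FracField mx my mz)
    (MvPolynomial.X (Sum.inl i))

/-- The image in `F` of the `i`-th y-variable. -/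
noncomputable def Yvar (mx my mz : ℕ) (i : Fin my) : FracField mx my mz :=
  algebraMap (MvPolynomial (Fin mx ⊕ (Fin my ⊕ Fin mz)) ℝ) (FracField mx my mz)
    (MvPolynomial.X (Sum.inr (Sum.inl i)))

/-- The image in `F` of the `i`-th z-variable. -/
noncomputable def Zvar (mx my mz : ℕ) (i : Fin mz) : FracField mx my mz :=
  algebraMap (MvPolynomial (Fin mx ⊕ (Fin my ⊕ Fin mz)) ℝ) (FracField mx my mz)
    (MvPolynomial.X (Sum.inr (Sum.inr i)))

/-- The subfield of `F` generated over `ℝ` by the z-variables. -/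
noncomputable def ZSubfield (mx my mz : ℕ) : Subfield (FracField mx my mz) :=
  Subfield.closure (Set.range (algebraMap ℝ (FracField mx my mz)) ∪ Set.range (Zvar mx my mz))

/-!
Setting the y-variables to zero is an `ℝ`-algebra map `φ` from the polynomial ring to `F`. It
extends to the fractions whose denominator does not vanish at `y = 0`, i.e. to the localization at
`ker φ`, which embeds in `F`. An element of this local ring is a unit exactly when its value is
nonzero, so the elements of `F` fixed by the extension form a subfield; it contains the
z-variables, hence the whole z-subfield. Each `f j` lies in the localization and is sent to the
monomial `∏ i, X i ^ a j i`, so a linear relation among the `f j` would give one among distinct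
monomials.
-/

namespace AtKer

variable {k R K : Type*} [CommRing k] [CommRing R] [Algebra k R] [Field K] [Algebra k K]
  (φ : R →ₐ[k] K)

instance : (RingHom.ker φ).IsPrime := RingHom.ker_isPrime φ

noncomputable def lift : Localization.AtPrime (RingHom.ker φ) →ₐ[k] K :=
  IsLocalization.liftAlgHom (M := (RingHom.ker φ).primeCompl) (f := φ) fun s =>
    isUnit_iff_ne_zero.2 (mt RingHom.mem_ker.2 s.2)

lemma lift_algebraMap (r : R) : lift φ (algebraMap R _ r) = φ r :=
  IsLocalization.lift_eq (M := (RingHom.ker φ).primeCompl) _ r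

lemma isUnit_of_lift_ne_zero {t : Localization.AtPrime (RingHom.ker φ)} (ht : lift φ t ≠ 0) :
    IsUnit t := by
  by_contra hu
  have ht_mem : t ∈ Ideal.map (algebraMap R _) (RingHom.ker φ) := by
    rw [Localization.AtPrime.map_eq_maximalIdeal]
    exact hu
  have hle : Ideal.map (algebraMap R _) (RingHom.ker φ) ≤ RingHom.ker (lift φ) :=
    Ideal.map_le_iff_le_comap.2 fun r hr => by
      simpa [lift_algebraMap] using hr
  exact ht (hle ht_mem)

variable [IsDomain R]

lemma primeCompl_le_nonZeroDivisors : (RingHom.ker φ).primeCompl ≤ nonZeroDivisors R :=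
  fun _ hs => mem_nonZeroDivisors_of_ne_zero fun h => hs (h ▸ zero_mem _)

variable [Algebra R K] [IsScalarTower k R K] [IsFractionRing R K]

noncomputable def toFrac : Localization.AtPrime (RingHom.ker φ) →ₐ[k] K :=
  IsLocalization.liftAlgHom (M := (RingHom.ker φ).primeCompl)
    (f := IsScalarTower.toAlgHom k R K) fun s =>
    (IsFractionRing.to_map_ne_zero_of_mem_nonZeroDivisors
      (primeCompl_le_nonZeroDivisors φ s.2)).isUnit

lemma toFrac_algebraMap (r : R) : toFrac φ (algebraMap R _ r) = algebraMap R K r :=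
  IsLocalization.lift_eq (M := (RingHom.ker φ).primeCompl) _ r

lemma toFrac_injective : Function.Injective (toFrac φ) :=
  IsLocalization.lift_injective_iff (M := (RingHom.ker φ).primeCompl) _ |>.2 fun _ _ =>
    (IsLocalization.injective _ (primeCompl_le_nonZeroDivisors φ)).eq_iff.trans
      (IsFractionRing.injective R K).eq_iff.symm

noncomputable def evalGraph : Subalgebra k (K × K) := ((toFrac φ).prod (lift φ)).range

lemma algebraMap_mem_evalGraph (r : R) : (algebraMap R K r, φ r) ∈ evalGraph φ :=
  ⟨algebraMap R _ r, by simp [toFrac_algebraMap, lift_algebraMap]⟩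

noncomputable def fixedSubfield : Subfield K where
  carrier := {u | (u, u) ∈ evalGraph φ}
  zero_mem' := zero_mem (evalGraph φ)
  one_mem' := one_mem (evalGraph φ)
  add_mem' {u v} hu hv :=
    show (u + v, u + v) ∈ evalGraph φ from add_mem (a := (u, u)) (b := (v, v)) hu hv
  neg_mem' {u} hu := show (-u, -u) ∈ evalGraph φ from neg_mem (x := (u, u)) hu
  mul_mem' {u v} hu hv :=
    show (u * v, u * v) ∈ evalGraph φ from mul_mem (a := (u, u)) (b := (v, v)) hu hv
  inv_mem' u := by
    rintro ⟨w, hw⟩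
    have hfst : toFrac φ w = u := congrArg Prod.fst hw
    have hsnd : lift φ w = u := congrArg Prod.snd hw
    obtain rfl | hu := eq_or_ne u 0
    · rw [inv_zero]
      exact zero_mem (evalGraph φ)
    obtain ⟨w, rfl⟩ := isUnit_of_lift_ne_zero φ (hsnd ▸ hu)
    exact ⟨↑w⁻¹, by simp [map_units_inv, hfst, hsnd]⟩

variable {φ} in
lemma linearIndependent_fst_of_mem_evalGraph {ι : Type*} {v : ι → K × K}
    (hv : ∀ i, v i ∈ evalGraph φ) (h : LinearIndependent k (Prod.snd ∘ v)) :
    LinearIndependent k (Prod.fst ∘ v) := by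
  choose w hw using hv
  have hsnd : Prod.snd ∘ v = lift φ ∘ w := funext fun i => by simp [← hw i]
  have hfst : Prod.fst ∘ v = toFrac φ ∘ w := funext fun i => by simp [← hw i]
  rw [hsnd] at h
  rw [hfst]
  exact (LinearIndependent.of_comp (lift φ).toLinearMap h).map'
    (toFrac φ).toLinearMap (LinearMap.ker_eq_bot.2 (toFrac_injective φ))

end AtKer

theorem MvPolynomial.linearIndependent_prod_X_pow {σ ι R : Type*} [CommSemiring R] [Fintype σ]
    {a : ι → σ → ℕ} (ha : Function.Injective a) :
    LinearIndependent R (fun j => ∏ i, (MvPolynomial.X i : MvPolynomial σ R) ^ a j i) := by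
  convert (MvPolynomial.basisMonomials σ R).linearIndependent.comp _
    (Finsupp.equivFunOnFinite.symm.injective.comp ha) with j
  simp [MvPolynomial.monomial_eq, Finsupp.prod_fintype]

open MvPolynomial

noncomputable def evalAtYZero (mx my mz : ℕ) :
    MvPolynomial (Fin mx ⊕ (Fin my ⊕ Fin mz)) ℝ →ₐ[ℝ] FracField mx my mz :=
  aeval (Sum.elim (Xvar mx my mz) (Sum.elim 0 (Zvar mx my mz)))

lemma X_mem_evalGraph (mx my mz : ℕ) (v : Fin mx ⊕ (Fin my ⊕ Fin mz)) :
    (algebraMap (MvPolynomial (Fin mx ⊕ (Fin my ⊕ Fin mz)) ℝ) (FracField mx my mz) (X v),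
      Sum.elim (Xvar mx my mz) (Sum.elim 0 (Zvar mx my mz)) v)
      ∈ AtKer.evalGraph (evalAtYZero mx my mz) := by
  simpa only [evalAtYZero, aeval_X] using
    AtKer.algebraMap_mem_evalGraph (evalAtYZero mx my mz) (X v)

lemma Xvar_mem_evalGraph (mx my mz : ℕ) (i : Fin mx) :
    (Xvar mx my mz i, Xvar mx my mz i) ∈ AtKer.evalGraph (evalAtYZero mx my mz) :=
  X_mem_evalGraph mx my mz (Sum.inl i)

lemma Yvar_mem_evalGraph (mx my mz : ℕ) (i : Fin my) :
    (Yvar mx my mz i, 0) ∈ AtKer.evalGraph (evalAtYZero mx my mz) :=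
  X_mem_evalGraph mx my mz (Sum.inr (Sum.inl i))

lemma ZSubfield_le_fixedSubfield (mx my mz : ℕ) :
    ZSubfield mx my mz ≤ AtKer.fixedSubfield (evalAtYZero mx my mz) := by
  refine Subfield.closure_le.2 (Set.union_subset ?_ ?_)
  · rintro _ ⟨r, rfl⟩
    exact (AtKer.evalGraph _).algebraMap_mem r
  · rintro _ ⟨i, rfl⟩
    exact X_mem_evalGraph mx my mz (Sum.inr (Sum.inr i))

lemma linearIndependent_prod_Xvar_pow (mx my mz : ℕ) {ι : Type*} {a : ι → Fin mx → ℕ}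
    (ha : Function.Injective a) :
    LinearIndependent ℝ (fun j => ∏ i, Xvar mx my mz i ^ a j i) := by
  let f := (IsScalarTower.toAlgHom ℝ _ (FracField mx my mz)).comp
    (rename (R := ℝ) (Sum.inl : Fin mx → Fin mx ⊕ (Fin my ⊕ Fin mz)))
  have hf : Function.Injective f :=
    (IsFractionRing.injective (MvPolynomial (Fin mx ⊕ (Fin my ⊕ Fin mz)) ℝ)
      (FracField mx my mz)).comp (rename_injective _ Sum.inl_injective)
  have hfX : (f.toLinearMap ∘ fun j => ∏ i, X i ^ a j i) =
      fun j => ∏ i, Xvar mx my mz i ^ a j i := by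
    funext j
    simp [f, Xvar]
  exact hfX ▸ (linearIndependent_prod_X_pow ha).map' f.toLinearMap (LinearMap.ker_eq_bot.2 hf)

/-- Lemma 2 of reference [me]: given, for each `j : Fin J`, finite sets `C j` of x-indices
and `D j` of y-indices, an exponent vector `a j : Fin mx → ℕ`, and coefficients
`P₁ j i' i''`, `P₂ j i' i''` (for `i' ∈ C j`, `i'' ∈ D j`) lying in the subfield of `F`
generated over `ℝ` by the z-variables, the functions
`f j = ∏ i, (X i + ∑_{i' ∈ C j} ∑_{i'' ∈ D j} (X i' * Y i'' * P₁ j i' i'' + Y i'' * P₂ j i' i''))^(a j i)`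
are linearly independent over `ℝ` whenever the exponent vectors `a j` are pairwise
distinct. -/
theorem products_linearIndependent (mx my mz J : ℕ)
    (C : Fin J → Finset (Fin mx)) (D : Fin J → Finset (Fin my))
    (a : Fin J → Fin mx → ℕ) (ha : Function.Injective a)
    (P₁ P₂ : Fin J → Fin mx → Fin my → FracField mx my mz)
    (hP₁ : ∀ j, ∀ i' ∈ C j, ∀ i'' ∈ D j, P₁ j i' i'' ∈ ZSubfield mx my mz)
    (hP₂ : ∀ j, ∀ i' ∈ C j, ∀ i'' ∈ D j, P₂ j i' i'' ∈ ZSubfield mx my mz) :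
    LinearIndependent ℝ (fun j : Fin J =>
      ∏ i : Fin mx,
        (Xvar mx my mz i +
            ∑ i' ∈ C j, ∑ i'' ∈ D j,
              (Xvar mx my mz i' * Yvar mx my mz i'' * P₁ j i' i'' +
                Yvar mx my mz i'' * P₂ j i' i'')) ^ a j i) := by
  have hZ := ZSubfield_le_fixedSubfield mx my mz
  have hX := Xvar_mem_evalGraph mx my mz
  have hY := Yvar_mem_evalGraph mx my mz
  -- each `f j`, paired with its value at `y = 0`
  let v : Fin J → FracField mx my mz × FracField mx my mz := fun j =>
    ∏ i : Fin mx,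
      ((Xvar mx my mz i, Xvar mx my mz i) +
          ∑ i' ∈ C j, ∑ i'' ∈ D j,
            ((Xvar mx my mz i', Xvar mx my mz i') * (Yvar mx my mz i'', 0) *
                (P₁ j i' i'', P₁ j i' i'') +
              (Yvar mx my mz i'', 0) * (P₂ j i' i'', P₂ j i' i''))) ^ a j i
  have hv : ∀ j, v j ∈ AtKer.evalGraph (evalAtYZero mx my mz) := fun j =>
    prod_mem fun i _ => pow_mem (add_mem (hX i) (sum_mem fun i' hi' => sum_mem fun i'' hi'' =>
      add_mem (mul_mem (mul_mem (hX i') (hY i'')) (hZ (hP₁ j i' hi' i'' hi'')))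
        (mul_mem (hY i'') (hZ (hP₂ j i' hi' i'' hi''))))) _
  have hsnd : Prod.snd ∘ v = fun j => ∏ i, Xvar mx my mz i ^ a j i := by
    funext j
    simp [v, Prod.snd_prod, Prod.snd_sum]
  have hfst := AtKer.linearIndependent_fst_of_mem_evalGraph hv
    (hsnd ▸ linearIndependent_prod_Xvar_pow mx my mz ha)
  simpa [v, Function.comp_def, Prod.fst_prod, Prod.fst_sum] using hfst
end

section
/- Let K, Q, W ∈ ℕ with 1 ≤ Q and 1 ≤ W ≤ K, let s, t, υ be positive real numbers, and let b : Fin Q → ℕ satisfy ∑_{q} b q = W, b q ≤ ⌈W/Q⌉ for all q (natural-number ceiling division), b q = ⌈W/Q⌉ for some q, and 2W ≤ QK + b q for all q. For n ∈ ℕ define the real sequences d_C(n) = n^{K²−K}·(s n)^{QK} + n^{K²−K}·(s n)^{QK−W}·(υ n)^{W} + n^{(K−1)²}·(n+1)^{K−1}·(max(s n, t n))^{QK}, d_D(n) = n^{K²−K}·(t n)^{QK} + n^{(K−1)²}·(n+1)^{K−1}·(max(s n, t n))^{QK} + n^{(K−1)²}·(n+1)^{K−1}·(s n)^{QK−W}·(υ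 n)^{W}, d_R(q, n) = (b q)·n^{K²−K}·(s n)^{QK−W}·(υ n)^{W} + n^{K²−K}·(max(s n, t n))^{K(Q−1)}·(max(s n + 1, t n))^{W}·(max(s n, t n + 1))^{K−W} + n^{K²−K}·(s n)^{QK−2W+b q}·(s n + 1)^{W−b q}·(υ n)^{W}, and T(n) = max{ d_C(n), d_D(n), max_{q ∈ Fin Q} d_R(q, n) }. Then as n → ∞, T(n)/n^{K²−K+QK} converges to χ + max(Γ, ζ) + max(⌈W/Q⌉·χ, max(ζ, Γ)), where Γ = s^{QK}, χ = s^{QK−W}·υ^{W}, and ζ = t^{QK}. -/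
/-!
Every summand of `d_C`, `d_D` and `d_R q` is a product of powers of sequences growing linearly
in `n` (`n`, `n + 1`, `s n`, `s n + 1`, `max (s n) (t n)`, ...), and its exponents add up to
`K² - K + QK`. Limits of `f n / n ^ d` pass through sums, products, powers and finite maxima,
so `T n / n ^ (K² - K + QK)` tends to
`max (Γ + χ + M) (max (ζ + M + χ) (⌈W/Q⌉ χ + M + χ))` with `M = max Γ ζ`; the common summand
`χ + M` then gives the claimed value.
-/

open Filter Topology

theorem Finset.sup'_comp_eq_of_le_of_exists_eq {ι α β : Type*} [Preorder α] [SemilatticeSup β]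
    {s : Finset ι} (hs : s.Nonempty) {b : ι → α} {m : α} (hb : ∀ i ∈ s, b i ≤ m)
    (hm : ∃ i ∈ s, b i = m) {g : α → β} (hg : Monotone g) : s.sup' hs (g ∘ b) = g m := by
  obtain ⟨i, hi, rfl⟩ := hm
  exact le_antisymm (Finset.sup'_le _ _ fun j hj => hg (hb j hj)) (Finset.le_sup' (g ∘ b) hi)

def HasNormalizedLimit (f : ℕ → ℝ) (d : ℕ) (L : ℝ) : Prop :=
  Tendsto (fun n : ℕ => f n / (n : ℝ) ^ d) atTop (𝓝 L)

namespace HasNormalizedLimit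

variable {f g : ℕ → ℝ} {d e : ℕ} {L M : ℝ}

theorem of_eq (h : HasNormalizedLimit f d L) (hd : d = e) (hL : L = M) :
    HasNormalizedLimit f e M :=
  hd ▸ hL ▸ h

theorem add (hf : HasNormalizedLimit f d L) (hg : HasNormalizedLimit g d M) :
    HasNormalizedLimit (fun n => f n + g n) d (L + M) := by
  simpa only [HasNormalizedLimit, add_div] using Tendsto.add hf hg

theorem mul (hf : HasNormalizedLimit f d L) (hg : HasNormalizedLimit g e M) :
    HasNormalizedLimit (fun n => f n * g n) (d + e) (L * M) := by
  simpa only [HasNormalizedLimit, pow_add, mul_div_mul_comm] using Tendsto.mul hf hg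

theorem const_mul (c : ℝ) (hf : HasNormalizedLimit f d L) :
    HasNormalizedLimit (fun n => c * f n) d (c * L) := by
  simpa only [HasNormalizedLimit, mul_div_assoc] using Tendsto.const_mul c hf

theorem pow (hf : HasNormalizedLimit f d L) (k : ℕ) :
    HasNormalizedLimit (fun n => f n ^ k) (d * k) (L ^ k) := by
  simpa only [HasNormalizedLimit, pow_mul, div_pow] using Tendsto.pow hf k

theorem max (hf : HasNormalizedLimit f d L) (hg : HasNormalizedLimit g d M) :
    HasNormalizedLimit (fun n => max (f n) (g n)) d (max L M) :=
  (Tendsto.max hf hg).congr fun n => max_div_div_right (by positivity) _ _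

theorem finset_sup' {ι : Type*} {s : Finset ι} (hs : s.Nonempty) {f : ι → ℕ → ℝ} {L : ι → ℝ}
    (hf : ∀ i ∈ s, HasNormalizedLimit (f i) d (L i)) :
    HasNormalizedLimit (fun n => s.sup' hs (f · n)) d (s.sup' hs L) := by
  refine (Tendsto.finset_sup'_nhds_apply hs hf).congr fun n => ?_
  exact Finset.apply_sup'_eq_sup'_comp hs (· / (n : ℝ) ^ d)
    (fun x y => (max_div_div_right (by positivity) x y).symm) |>.symm

theorem add_const (hf : HasNormalizedLimit f d L) (hd : d ≠ 0) (c : ℝ) :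
    HasNormalizedLimit (fun n => f n + c) d L := by
  have hc : Tendsto (fun n : ℕ => c / (n : ℝ) ^ d) atTop (𝓝 0) :=
    tendsto_const_nhds.div_atTop <|
      (tendsto_pow_atTop hd).comp tendsto_natCast_atTop_atTop
  simpa only [HasNormalizedLimit, add_div, add_zero] using Tendsto.add hf hc

end HasNormalizedLimit

theorem hasNormalizedLimit_natCast_pow (d : ℕ) :
    HasNormalizedLimit (fun n => (n : ℝ) ^ d) d 1 :=
  tendsto_const_nhds.congr' <| (eventually_ne_atTop 0).mono fun _ hn =>
    (div_self (pow_ne_zero d (Nat.cast_ne_zero.mpr hn))).symm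

theorem hasNormalizedLimit_natCast : HasNormalizedLimit (fun n => (n : ℝ)) 1 1 := by
  simpa only [pow_one] using hasNormalizedLimit_natCast_pow 1

theorem hasNormalizedLimit_const_mul_natCast (a : ℝ) :
    HasNormalizedLimit (fun n => a * n) 1 a := by
  simpa only [mul_one] using hasNormalizedLimit_natCast.const_mul a

-- `cleanDim`, `dirtyDim` and `relayDim … (b q)` are the paper's `d_C`, `d_D` and `d_R(q, ·)`.
def cleanDim (K Q W : ℕ) (s t υ : ℝ) (n : ℕ) : ℝ :=
  (n : ℝ) ^ (K ^ 2 - K) * (s * n) ^ (Q * K) +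
    (n : ℝ) ^ (K ^ 2 - K) * (s * n) ^ (Q * K - W) * (υ * n) ^ W +
    (n : ℝ) ^ ((K - 1) ^ 2) * ((n : ℝ) + 1) ^ (K - 1) * (max (s * n) (t * n)) ^ (Q * K)

def dirtyDim (K Q W : ℕ) (s t υ : ℝ) (n : ℕ) : ℝ :=
  (n : ℝ) ^ (K ^ 2 - K) * (t * n) ^ (Q * K) +
    (n : ℝ) ^ ((K - 1) ^ 2) * ((n : ℝ) + 1) ^ (K - 1) * (max (s * n) (t * n)) ^ (Q * K) +
    (n : ℝ) ^ ((K - 1) ^ 2) * ((n : ℝ) + 1) ^ (K - 1) * (s * n) ^ (Q * K - W) * (υ * n) ^ W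

def relayDim (K Q W : ℕ) (s t υ : ℝ) (bq : ℕ) (n : ℕ) : ℝ :=
  (bq : ℝ) * (n : ℝ) ^ (K ^ 2 - K) * (s * n) ^ (Q * K - W) * (υ * n) ^ W +
    (n : ℝ) ^ (K ^ 2 - K) * (max (s * n) (t * n)) ^ (K * (Q - 1)) *
      (max (s * n + 1) (t * n)) ^ W * (max (s * n) (t * n + 1)) ^ (K - W) +
    (n : ℝ) ^ (K ^ 2 - K) * (s * n) ^ (Q * K + bq - 2 * W) * (s * n + 1) ^ (W - bq) * (υ * n) ^ W

theorem Nat.sq_sub_self_eq (K : ℕ) : K ^ 2 - K = (K - 1) ^ 2 + (K - 1) := by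
  cases K with
  | zero => rfl
  | succ k => simp only [Nat.add_sub_cancel]; ring_nf; omega

theorem hasNormalizedLimit_natCast_pow_mul_succ_pow (K : ℕ) :
    HasNormalizedLimit (fun n => (n : ℝ) ^ ((K - 1) ^ 2) * ((n : ℝ) + 1) ^ (K - 1)) (K ^ 2 - K) 1 :=
  ((hasNormalizedLimit_natCast_pow _).mul
    ((hasNormalizedLimit_natCast.add_const one_ne_zero 1).pow (K - 1))).of_eq
    (by rw [Nat.sq_sub_self_eq, one_mul]) (by rw [one_pow, one_mul])

section

variable {K Q W : ℕ} {s t υ : ℝ}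

theorem hasNormalizedLimit_const_mul_natCast_pow (a : ℝ) (k : ℕ) :
    HasNormalizedLimit (fun n => (a * n) ^ k) k (a ^ k) :=
  ((hasNormalizedLimit_const_mul_natCast a).pow k).of_eq (one_mul k) rfl

theorem hasNormalizedLimit_max_pow (k : ℕ) :
    HasNormalizedLimit (fun n => (max (s * n) (t * n)) ^ k) k (max s t ^ k) :=
  (((hasNormalizedLimit_const_mul_natCast s).max
    (hasNormalizedLimit_const_mul_natCast t)).pow k).of_eq (one_mul k) rfl

theorem hasNormalizedLimit_cleanDim (hWQK : W ≤ Q * K) :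
    HasNormalizedLimit (cleanDim K Q W s t υ) (K ^ 2 - K + Q * K)
      (s ^ (Q * K) + s ^ (Q * K - W) * υ ^ W + max s t ^ (Q * K)) := by
  refine ((((hasNormalizedLimit_natCast_pow _).mul
      (hasNormalizedLimit_const_mul_natCast_pow s _)).add
    ((((hasNormalizedLimit_natCast_pow _).mul (hasNormalizedLimit_const_mul_natCast_pow s _)).mul
      (hasNormalizedLimit_const_mul_natCast_pow υ W)).of_eq (by omega) rfl)).add
    ((hasNormalizedLimit_natCast_pow_mul_succ_pow K).mul (hasNormalizedLimit_max_pow _))).of_eq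
    rfl (by ring)

theorem hasNormalizedLimit_dirtyDim (hWQK : W ≤ Q * K) :
    HasNormalizedLimit (dirtyDim K Q W s t υ) (K ^ 2 - K + Q * K)
      (t ^ (Q * K) + max s t ^ (Q * K) + s ^ (Q * K - W) * υ ^ W) :=
  ((((hasNormalizedLimit_natCast_pow _).mul (hasNormalizedLimit_const_mul_natCast_pow t _)).add
    ((hasNormalizedLimit_natCast_pow_mul_succ_pow K).mul (hasNormalizedLimit_max_pow _))).add
    ((((hasNormalizedLimit_natCast_pow_mul_succ_pow K).mul
      (hasNormalizedLimit_const_mul_natCast_pow s _)).mul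
      (hasNormalizedLimit_const_mul_natCast_pow υ W)).of_eq (by omega) rfl)).of_eq
    rfl (by ring)

theorem hasNormalizedLimit_relayDim (hQ : 1 ≤ Q) (hWK : W ≤ K) {bq : ℕ} (hbW : bq ≤ W)
    (hcond : 2 * W ≤ Q * K + bq) :
    HasNormalizedLimit (relayDim K Q W s t υ bq) (K ^ 2 - K + Q * K)
      (bq * (s ^ (Q * K - W) * υ ^ W) + max s t ^ (Q * K) + s ^ (Q * K - W) * υ ^ W) := by
  have hQK : K * (Q - 1) + K = Q * K := by
    obtain ⟨Q, rfl⟩ := Nat.exists_eq_add_of_le' hQ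
    simp only [Nat.add_sub_cancel]; ring
  have hmax : max s t ^ (K * (Q - 1)) * max s t ^ W * max s t ^ (K - W) = max s t ^ (Q * K) := by
    rw [← pow_add, ← pow_add]; congr 1; omega
  have hs : s ^ (Q * K + bq - 2 * W) * s ^ (W - bq) = s ^ (Q * K - W) := by
    rw [← pow_add]; congr 1; omega
  have hsn := hasNormalizedLimit_const_mul_natCast s
  have htn := hasNormalizedLimit_const_mul_natCast t
  refine (((((((hasNormalizedLimit_natCast_pow _).const_mul (bq : ℝ)).mul
      (hasNormalizedLimit_const_mul_natCast_pow s _)).mul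
      (hasNormalizedLimit_const_mul_natCast_pow υ W)).of_eq (by omega) rfl).add
    ((((hasNormalizedLimit_natCast_pow _).mul (hasNormalizedLimit_max_pow _)).mul
      (((hsn.add_const one_ne_zero 1).max htn).pow W)).mul
      ((hsn.max (htn.add_const one_ne_zero 1)).pow (K - W)) |>.of_eq (by omega) rfl)).add
    ((((hasNormalizedLimit_natCast_pow _).mul (hasNormalizedLimit_const_mul_natCast_pow s _)).mul
      ((hsn.add_const one_ne_zero 1).pow (W - bq))).mul
      (hasNormalizedLimit_const_mul_natCast_pow υ W) |>.of_eq (by omega) rfl)).of_eq rfl ?_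
  linear_combination hmax + υ ^ W * hs

end

theorem total_dimension_normalized_limit_general (K Q W : ℕ) (hQ : 1 ≤ Q) (hWK : W ≤ K)
    (s t υ : ℝ) (hs : 0 < s) (ht : 0 < t) (hυ : 0 < υ)
    (b : Fin Q → ℕ) (hsum : ∑ q, b q = W)
    (hble : ∀ q, b q ≤ W ⌈/⌉ Q) (hbmax : ∃ q, b q = W ⌈/⌉ Q)
    (hcond : ∀ q, 2 * W ≤ Q * K + b q) :
    Filter.Tendsto
      (fun n : ℕ =>
        (max
            ((n : ℝ) ^ (K ^ 2 - K) * (s * n) ^ (Q * K) +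
              (n : ℝ) ^ (K ^ 2 - K) * (s * n) ^ (Q * K - W) * (υ * n) ^ W +
              (n : ℝ) ^ ((K - 1) ^ 2) * ((n : ℝ) + 1) ^ (K - 1) *
                (max (s * n) (t * n)) ^ (Q * K))
            (max
              ((n : ℝ) ^ (K ^ 2 - K) * (t * n) ^ (Q * K) +
                (n : ℝ) ^ ((K - 1) ^ 2) * ((n : ℝ) + 1) ^ (K - 1) *
                  (max (s * n) (t * n)) ^ (Q * K) +
                (n : ℝ) ^ ((K - 1) ^ 2) * ((n : ℝ) + 1) ^ (K - 1) *
                  (s * n) ^ (Q * K - W) * (υ * n) ^ W)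
              (Finset.univ.sup' (Finset.univ_nonempty_iff.mpr ⟨⟨0, hQ⟩⟩)
                (fun q : Fin Q =>
                  (b q : ℝ) * (n : ℝ) ^ (K ^ 2 - K) * (s * n) ^ (Q * K - W) * (υ * n) ^ W +
                    (n : ℝ) ^ (K ^ 2 - K) * (max (s * n) (t * n)) ^ (K * (Q - 1)) *
                      (max (s * n + 1) (t * n)) ^ W * (max (s * n) (t * n + 1)) ^ (K - W) +
                    (n : ℝ) ^ (K ^ 2 - K) * (s * n) ^ (Q * K + b q - 2 * W) *
                      (s * n + 1) ^ (W - b q) * (υ * n) ^ W)))) /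
          (n : ℝ) ^ (K ^ 2 - K + Q * K))
      Filter.atTop
      (nhds
        (s ^ (Q * K - W) * υ ^ W + max (s ^ (Q * K)) (t ^ (Q * K)) +
          max (((W ⌈/⌉ Q : ℕ) : ℝ) * (s ^ (Q * K - W) * υ ^ W))
            (max (t ^ (Q * K)) (s ^ (Q * K))))) := by
  have hWQK : W ≤ Q * K := hWK.trans (Nat.le_mul_of_pos_left K hQ)
  have hbW (q : Fin Q) : b q ≤ W := hsum ▸ Finset.single_le_sum (by simp) (Finset.mem_univ q)
  have hmax : max s t ^ (Q * K) = max (s ^ (Q * K)) (t ^ (Q * K)) :=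
    pow_left_monotoneOn.map_max hs.le ht.le
  have hsup := Finset.sup'_comp_eq_of_le_of_exists_eq (Finset.univ_nonempty_iff.mpr ⟨⟨0, hQ⟩⟩)
    (fun q _ => hble q) (by simpa using hbmax)
    (g := fun x : ℕ => (x : ℝ) * (s ^ (Q * K - W) * υ ^ W) + max s t ^ (Q * K) +
      s ^ (Q * K - W) * υ ^ W)
    fun x y hxy => by dsimp only; gcongr
  refine ((hasNormalizedLimit_cleanDim hWQK).max ((hasNormalizedLimit_dirtyDim hWQK).max
    (HasNormalizedLimit.finset_sup' _ fun q _ =>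
      hasNormalizedLimit_relayDim hQ hWK (hbW q) (hcond q)))).of_eq rfl ?_
  rw [Function.comp_def] at hsup
  rw [hsup, hmax]
  grind

/-- Equation (63) in Step 5 of the proof of Theorem 1: with `d_C n` the total dimension at a
clean receiver, `d_D n` at a dirty receiver and `d_R q n` at the `q`-th relay receive antenna
(`b q = |B_q|` the size of the `q`-th block of the partition of the `W` transmitters, so
`max_q b q = ⌈W/Q⌉`), the minimum number of frequency slots
`T n = max {d_C n, d_D n, max_q d_R q n}` satisfies
`T n / n^(K²-K+QK) → χ + max Γ ζ + max (⌈W/Q⌉·χ) (max ζ Γ)` as `n → ∞`, where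
`Γ = s^(QK)`, `χ = s^(QK-W)·υ^W`, `ζ = t^(QK)`. -/
theorem total_dimension_normalized_limit (K Q W : ℕ) (hQ : 1 ≤ Q) (hW1 : 1 ≤ W) (hWK : W ≤ K)
    (s t υ : ℝ) (hs : 0 < s) (ht : 0 < t) (hυ : 0 < υ)
    (b : Fin Q → ℕ) (hsum : ∑ q, b q = W)
    (hble : ∀ q, b q ≤ W ⌈/⌉ Q) (hbmax : ∃ q, b q = W ⌈/⌉ Q)
    (hcond : ∀ q, 2 * W ≤ Q * K + b q) :
    Filter.Tendsto
      (fun n : ℕ =>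
        (max
            ((n : ℝ) ^ (K ^ 2 - K) * (s * n) ^ (Q * K) +
              (n : ℝ) ^ (K ^ 2 - K) * (s * n) ^ (Q * K - W) * (υ * n) ^ W +
              (n : ℝ) ^ ((K - 1) ^ 2) * ((n : ℝ) + 1) ^ (K - 1) *
                (max (s * n) (t * n)) ^ (Q * K))
            (max
              ((n : ℝ) ^ (K ^ 2 - K) * (t * n) ^ (Q * K) +
                (n : ℝ) ^ ((K - 1) ^ 2) * ((n : ℝ) + 1) ^ (K - 1) *
                  (max (s * n) (t * n)) ^ (Q * K) +
                (n : ℝ) ^ ((K - 1) ^ 2) * ((n : ℝ) + 1) ^ (K - 1) *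
                  (s * n) ^ (Q * K - W) * (υ * n) ^ W)
              (Finset.univ.sup' (Finset.univ_nonempty_iff.mpr ⟨⟨0, hQ⟩⟩)
                (fun q : Fin Q =>
                  (b q : ℝ) * (n : ℝ) ^ (K ^ 2 - K) * (s * n) ^ (Q * K - W) * (υ * n) ^ W +
                    (n : ℝ) ^ (K ^ 2 - K) * (max (s * n) (t * n)) ^ (K * (Q - 1)) *
                      (max (s * n + 1) (t * n)) ^ W * (max (s * n) (t * n + 1)) ^ (K - W) +
                    (n : ℝ) ^ (K ^ 2 - K) * (s * n) ^ (Q * K + b q - 2 * W) *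
                      (s * n + 1) ^ (W - b q) * (υ * n) ^ W)))) /
          (n : ℝ) ^ (K ^ 2 - K + Q * K))
      Filter.atTop
      (nhds
        (s ^ (Q * K - W) * υ ^ W + max (s ^ (Q * K)) (t ^ (Q * K)) +
          max (((W ⌈/⌉ Q : ℕ) : ℝ) * (s ^ (Q * K - W) * υ ^ W))
            (max (t ^ (Q * K)) (s ^ (Q * K))))) :=
  total_dimension_normalized_limit_general K Q W hQ hWK s t υ hs ht hυ b hsum hble hbmax hcond
end
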